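/- Let G = (V, E, ℓ) be an episode and W ⊆ V a subset of vertices such that the induced episode G(W) or G(V \ W) is a prefix subgraph of G. Let M = M(G) and N = M(G(W)), and define the map ρ from states of M to states of N by ρ(H) = H(V(H) ∩ W), the episode induced by H on the vertices of H lying in W. Then ρ is a surjection onto the states of N, and for every edge (H, F) ∈ E(M) one of the following holds: (1) ρ(H) = ρ(F), or ρ(H) is the initial (empty) state of N; or (2) (ρ(H), ρ(F)) is an edge of N and (H, F) ∈ block(W | G). -/

import Mathlib

open scoped Classical

/-- An episode: a finite DAG with labelled vertices. -/
structure Episode (V A : Type*) where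
  verts : Finset V
  edges : Finset (V × V)
  lab : V → A
  edges_sub : ∀ e ∈ edges, e.1 ∈ verts ∧ e.2 ∈ verts
  acyclic : ∀ v, ¬ Relation.TransGen (fun a b => (a, b) ∈ edges) v v

namespace Episode

variable {V A : Type*} [DecidableEq V]

/-- A strict episode: any two distinct vertices sharing a label are connected. -/
def Strict (G : Episode V A) : Prop :=
  ∀ v ∈ G.verts, ∀ w ∈ G.verts, v ≠ w → G.lab v = G.lab w →
    (v, w) ∈ G.edges ∨ (w, v) ∈ G.edges

/-- `W` induces a prefix subgraph of `G`: it is closed under taking ancestors. -/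
def IsPrefix (G : Episode V A) (W : Finset V) : Prop :=
  W ⊆ G.verts ∧ ∀ v ∈ W, ∀ w, (w, v) ∈ G.edges → w ∈ W

/-- Labelled edge of the machine `M(G)`: `(H, F)` is an edge with label `l` when `H` is
obtained from `F` by deleting a single sink vertex of `F` labelled `l`
(states are identified with their vertex sets, as prefix subgraphs are induced). -/
def MachEdge (G : Episode V A) (H F : Finset V) (l : A) : Prop :=
  G.IsPrefix H ∧ G.IsPrefix F ∧
    ∃ x, x ∉ H ∧ F = insert x H ∧ G.lab x = l ∧ ∀ w ∈ F, (x, w) ∉ G.edges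

/-- The set of (unlabelled) edges of the machine `M(G)`. -/
def MachineEdges (G : Episode V A) : Set (Finset V × Finset V) :=
  {e | ∃ l, G.MachEdge e.1 e.2 l}

/-- A sequence `S` covers an episode `G`. -/
def Covers (G : Episode V A) (S : List A) : Prop :=
  ∃ m : V → ℕ, Set.InjOn m ↑G.verts ∧
    (∀ v ∈ G.verts, S[m v]? = some (G.lab v)) ∧
    ∀ e ∈ G.edges, m e.1 < m e.2

/-- The induced episode `G(W)`. -/
def induce (G : Episode V A) (W : Finset V) : Episode V A where
  verts := G.verts ∩ W
  edges := G.edges.filter fun e => e.1 ∈ W ∧ e.2 ∈ W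
  lab := G.lab
  edges_sub := by
    intro e he
    rw [Finset.mem_filter] at he
    have h1 := G.edges_sub e he.1
    exact ⟨Finset.mem_inter.mpr ⟨h1.1, he.2.1⟩, Finset.mem_inter.mpr ⟨h1.2, he.2.2⟩⟩
  acyclic := by
    intro v hv
    have key : ∀ a b, Relation.TransGen (fun a b => (a, b) ∈ G.edges.filter
        fun e => e.1 ∈ W ∧ e.2 ∈ W) a b → Relation.TransGen (fun a b => (a, b) ∈ G.edges) a b := by
      intro a b h
      induction h with
      | single h => exact Relation.TransGen.single (Finset.mem_filter.mp h).1
      | tail _ h ih => exact Relation.TransGen.tail ih (Finset.mem_filter.mp h).1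
    exact G.acyclic v (key v v hv)

/-- One greedy step of the machine `M(G)` from state `H` reading the symbol `s`:
follow the outgoing edge labelled `s` if there is one, otherwise stay. -/
noncomputable def greedyStep (G : Episode V A) (H : Finset V) (s : A) : Finset V :=
  if h : ∃ F, G.MachEdge H F s then h.choose else H

/-- The greedy state `g(M(G), S, H)`. -/
noncomputable def greedy (G : Episode V A) : Finset V → List A → Finset V
  | H, [] => H
  | H, s :: S => greedy G (G.greedyStep H s) S

/-- The edge set `block(W | G)` of the machine `M(G)`. -/
def Block (G : Episode V A) (W : Finset V) : Set (Finset V × Finset V) :=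
  {e | (∃ l, G.MachEdge e.1 e.2 l) ∧ (e.1 ∩ W).Nonempty ∧ e.2 \ e.1 ⊆ W}

/-- The states of the machine `M(G)`: all prefix subgraphs of `G`. -/
noncomputable def states (G : Episode V A) : Finset (Finset V) :=
  G.verts.powerset.filter fun X => G.IsPrefix X

/-- The number of positions `i` of `S` at which the machine is (greedily) in state `H`
and the symbol read is `l`. -/
noncomputable def countHL (G : Episode V A) (S : List A) (H : Finset V) (l : A) : ℕ :=
  ((Finset.range S.length).filter fun i => G.greedy ∅ (S.take i) = H ∧ S[i]? = some l).card

section Prob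

variable [Fintype A]

/-- `pInd G p H n`: probability that `n` i.i.d. symbols with distribution `p`
lead the machine greedily from the source state to `H`. -/
noncomputable def pInd (G : Episode V A) (p : A → ℝ) (H : Finset V) (n : ℕ) : ℝ :=
  ∑ f : Fin n → A, if G.greedy ∅ (List.ofFn f) = H then ∏ i, p (f i) else 0

/-- Unnormalized weight of label `l` at state `H` in the partition model. -/
noncomputable def pweight (G : Episode V A) (C₁ C₂ : Set (Finset V × Finset V))
    (u : A → ℝ) (t₁ t₂ : ℝ) (H : Finset V) (l : A) : ℝ :=
  if ∃ F, (H, F) ∈ C₁ ∧ G.MachEdge H F l then Real.exp (u l + t₁)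
  else if ∃ F, (H, F) ∈ C₂ ∧ G.MachEdge H F l then Real.exp (u l + t₂)
  else Real.exp (u l)

/-- Conditional probability `p(l | H)` of the partition model. -/
noncomputable def condP (G : Episode V A) (C₁ C₂ : Set (Finset V × Finset V))
    (u : A → ℝ) (t₁ t₂ : ℝ) (H : Finset V) (l : A) : ℝ :=
  G.pweight C₁ C₂ u t₁ t₂ H l / ∑ l' : A, G.pweight C₁ C₂ u t₁ t₂ H l'

/-- Probability of a sequence under the partition model, started from state `H`. -/
noncomputable def seqP (G : Episode V A) (C₁ C₂ : Set (Finset V × Finset V))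
    (u : A → ℝ) (t₁ t₂ : ℝ) : Finset V → List A → ℝ
  | _, [] => 1
  | H, s :: S => G.condP C₁ C₂ u t₁ t₂ H s * seqP G C₁ C₂ u t₁ t₂ (G.greedyStep H s) S

/-- `pPart G C₁ C₂ u t₁ t₂ H n`: probability under the partition model that a random
sequence of length `n` leads the machine greedily from the source state to `H`. -/
noncomputable def pPart (G : Episode V A) (C₁ C₂ : Set (Finset V × Finset V))
    (u : A → ℝ) (t₁ t₂ : ℝ) (H : Finset V) (n : ℕ) : ℝ :=
  ∑ f : Fin n → A,
    if G.greedy ∅ (List.ofFn f) = H then G.seqP C₁ C₂ u t₁ t₂ ∅ (List.ofFn f) else 0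

end Prob

/-- The transitive closure of an episode. -/
noncomputable def closure (G : Episode V A) : Episode V A where
  verts := G.verts
  edges := (G.verts ×ˢ G.verts).filter fun e =>
    Relation.TransGen (fun a b => (a, b) ∈ G.edges) e.1 e.2
  lab := G.lab
  edges_sub := by
    intro e he
    rw [Finset.mem_filter] at he
    exact Finset.mem_product.mp he.1
  acyclic := by
    intro v hv
    apply G.acyclic v
    rw [← Relation.transGen_idem (r := fun a b => (a, b) ∈ G.edges)]
    have key : ∀ a b, Relation.TransGen (fun a b => (a, b) ∈ (G.verts ×ˢ G.verts).filter fun e =>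
        Relation.TransGen (fun a b => (a, b) ∈ G.edges) e.1 e.2) a b →
        Relation.TransGen (Relation.TransGen fun a b => (a, b) ∈ G.edges) a b := by
      intro a b h
      induction h with
      | single h => exact Relation.TransGen.single (Finset.mem_filter.mp h).2
      | tail _ h ih => exact Relation.TransGen.tail ih (Finset.mem_filter.mp h).2
    exact key v v hv

end Episode

/-!
A machine edge `(H, F)` adds a single sink `x` to `H`. If `x ∉ W` the projection `H ∩ W` does not
move; otherwise `x` is still a sink of `F ∩ W` in `G(W)`, so the projected pair is an edge of
`M(G(W))`. For surjectivity, a prefix `H'` of `G(W)` is already a prefix of `G` when `W` is one,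
and `H' ∪ (V \ W)` is a prefix of `G` projecting to `H'` when `V \ W` is one.
-/

namespace Episode

variable {V A : Type*} [DecidableEq V] {G : Episode V A} {W H H' F : Finset V} {l : A}

theorem IsPrefix.inter_induce (hH : G.IsPrefix H) (W : Finset V) :
    (G.induce W).IsPrefix (H ∩ W) := by
  refine ⟨Finset.inter_subset_inter_right hH.1, fun v hv w hwv => ?_⟩
  rw [induce, Finset.mem_filter] at hwv
  exact Finset.mem_inter.mpr ⟨hH.2 v (Finset.mem_inter.mp hv).1 w hwv.1, hwv.2.1⟩

theorem IsPrefix.subset_of_induce (hH' : (G.induce W).IsPrefix H') : H' ⊆ W :=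
  hH'.1.trans Finset.inter_subset_right

theorem IsPrefix.of_induce (hH' : (G.induce W).IsPrefix H') (hW : G.IsPrefix W) :
    G.IsPrefix H' := by
  refine ⟨hH'.1.trans Finset.inter_subset_left, fun v hv w hwv => ?_⟩
  have hvW := hH'.subset_of_induce hv
  exact hH'.2 v hv w (Finset.mem_filter.mpr ⟨hwv, hW.2 v hvW w hwv, hvW⟩)

theorem IsPrefix.union_sdiff_of_induce (hH' : (G.induce W).IsPrefix H')
    (hWc : G.IsPrefix (G.verts \ W)) : G.IsPrefix (H' ∪ (G.verts \ W)) := by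
  refine ⟨Finset.union_subset (hH'.1.trans Finset.inter_subset_left) Finset.sdiff_subset,
    fun v hv w hwv => ?_⟩
  rcases Finset.mem_union.mp hv with hv | hv
  · by_cases hwW : w ∈ W
    · exact Finset.mem_union_left _
        (hH'.2 v hv w (Finset.mem_filter.mpr ⟨hwv, hwW, hH'.subset_of_induce hv⟩))
    · exact Finset.mem_union_right _ (Finset.mem_sdiff.mpr ⟨(G.edges_sub _ hwv).1, hwW⟩)
  · exact Finset.mem_union_right _ (hWc.2 v hv w hwv)

theorem union_sdiff_inter_eq (hH' : H' ⊆ W) : (H' ∪ (G.verts \ W)) ∩ W = H' := by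
  rw [Finset.union_inter_distrib_right, Finset.sdiff_inter_self, Finset.union_empty,
    Finset.inter_eq_left.mpr hH']

theorem MachEdge.inter_eq_of_not_sdiff_subset (h : G.MachEdge H F l) (hW : ¬ F \ H ⊆ W) :
    H ∩ W = F ∩ W := by
  obtain ⟨-, -, x, hxH, rfl, -, -⟩ := h
  rw [Finset.insert_sdiff_of_notMem _ hxH, Finset.sdiff_self, insert_empty_eq,
    Finset.singleton_subset_iff] at hW
  rw [Finset.insert_inter_of_notMem hW]

theorem MachEdge.induce_inter (h : G.MachEdge H F l) (hW : F \ H ⊆ W) :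
    (G.induce W).MachEdge (H ∩ W) (F ∩ W) l := by
  obtain ⟨hH, hF, x, hxH, rfl, hlab, hsink⟩ := h
  rw [Finset.insert_sdiff_of_notMem _ hxH, Finset.sdiff_self, insert_empty_eq,
    Finset.singleton_subset_iff] at hW
  refine ⟨hH.inter_induce W, hF.inter_induce W, x, fun hx => hxH (Finset.mem_inter.mp hx).1,
    Finset.insert_inter_of_mem hW, hlab, fun w hw hxw => ?_⟩
  exact hsink w (Finset.mem_inter.mp hw).1 (Finset.mem_filter.mp hxw).1

end Episode

theorem Episode.block_projection_general {V A : Type*} [DecidableEq V]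
    (G : Episode V A) (W : Finset V)
    (hpre : G.IsPrefix W ∨ G.IsPrefix (G.verts \ W)) :
    (∀ H' : Finset V, (G.induce W).IsPrefix H' → ∃ H : Finset V, G.IsPrefix H ∧ H ∩ W = H') ∧
    (∀ (H F : Finset V) (l : A), G.MachEdge H F l →
      (H ∩ W = F ∩ W ∨ H ∩ W = ∅) ∨
      ((∃ l', (G.induce W).MachEdge (H ∩ W) (F ∩ W) l') ∧ (H, F) ∈ G.Block W)) := by
  refine ⟨fun H' hH' => ?_, fun H F l hHF => ?_⟩
  · rcases hpre with hW | hWc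
    · exact ⟨H', hH'.of_induce hW, Finset.inter_eq_left.mpr hH'.subset_of_induce⟩
    · exact ⟨_, hH'.union_sdiff_of_induce hWc, union_sdiff_inter_eq hH'.subset_of_induce⟩
  by_cases hnew : F \ H ⊆ W
  · by_cases hHW : H ∩ W = ∅
    · exact Or.inl (Or.inr hHW)
    · exact Or.inr ⟨⟨l, hHF.induce_inter hnew⟩,
        ⟨l, hHF⟩, Finset.nonempty_iff_ne_empty.mpr hHW, hnew⟩
  · exact Or.inl (Or.inl (hHF.inter_eq_of_not_sdiff_subset hnew))

/-- if `W` or its complement induces a prefix subgraph of `G`, then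
`ρ(H) = H ∩ W` is a surjection from the states of `M(G)` onto the states of `M(G(W))`,
and every machine edge `(H, F)` of `M(G)` satisfies: either `ρ(H) = ρ(F)` or `ρ(H)` is the
initial state, or `(ρ(H), ρ(F))` is an edge of `M(G(W))` and `(H, F) ∈ block(W | G)`. -/
theorem Episode.block_projection {V A : Type*} [DecidableEq V]
    (G : Episode V A) (W : Finset V) (hW : W ⊆ G.verts)
    (hpre : G.IsPrefix W ∨ G.IsPrefix (G.verts \ W)) :
    (∀ H' : Finset V, (G.induce W).IsPrefix H' → ∃ H : Finset V, G.IsPrefix H ∧ H ∩ W = H') ∧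
    (∀ (H F : Finset V) (l : A), G.MachEdge H F l →
      (H ∩ W = F ∩ W ∨ H ∩ W = ∅) ∨
      ((∃ l', (G.induce W).MachEdge (H ∩ W) (F ∩ W) l') ∧ (H, F) ∈ G.Block W)) :=
  Episode.block_projection_general G W hpre
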